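/- arXiv:2402.12683 — 3 statements merged into one kernel-verified Lean document; each statement's English description precedes it below -/
import Mathlib

section
/- Let (X_1,Y_1),...,(X_n,Y_n),(X_{n+1},Y_{n+1}) be i.i.d., let s be a score function, set s_i = s(X_i,Y_i), and let q̂ be the ⌈(n+1)(1-α)⌉/n empirical quantile of s_1,...,s_n (i.e., the k-th smallest with k = ⌈(n+1)(1-α)⌉, assuming ⌈(n+1)(1-α)⌉ ≤ n). Then P(s(X_{n+1},Y_{n+1}) ≤ q̂) ≥ 1-α, hence P(Y_{n+1} ∈ C(X_{n+1})) ≥ 1-α where C(x) = {y : s(x,y) ≤ q̂}. -/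
/-!
Let `S i = s (Z i)` and call `#{i | S i < S j}` the strict rank of `S j` among all `n + 1`
scores. For `1 ≤ k ≤ n`, the test score satisfies `S (n+1) ≤ q̂` exactly when its rank is
`< k`.
Whatever the scores, at least `k` indices have rank `< k` (the first `k` in sorted order), so the
`n + 1` events `{rank j < k}` have probabilities summing to at least `k`. Since i.i.d. scores are
exchangeable, these events are equiprobable, whence `P(rank (n+1) < k) ≥ k / (n + 1) ≥ 1 - α`.
-/

open MeasureTheory ProbabilityTheory Real Set

noncomputable def kthSmallest {n : ℕ} (v : Fin n → ℝ) (k : ℕ) : ℝ :=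
  ((List.ofFn v : Multiset ℝ).sort (· ≤ ·)).getD (k-1) 0

open Finset
open scoped ENNReal

section StrictRank

variable {ι α : Type*} [Fintype ι] [LinearOrder α]

def strictRank (v : ι → α) (j : ι) : ℕ := #{i | v i < v j}

theorem strictRank_comp_equiv {κ : Type*} [Fintype κ] (v : κ → α) (e : ι ≃ κ) (j : ι) :
    strictRank (v ∘ e) j = strictRank v (e j) :=
  card_equiv e (by simp)

theorem strictRank_last {n : ℕ} (v : Fin (n + 1) → α) :
    strictRank v (Fin.last n) = #{i : Fin n | v i.castSucc < v (Fin.last n)} := by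
  rw [strictRank, Fin.univ_castSuccEmb, filter_cons, if_neg (lt_irrefl _), filter_map, card_map]
  rfl

theorem strictRank_sort_le {n : ℕ} (v : Fin n → α) (j : Fin n) :
    strictRank v (Tuple.sort v j) ≤ j := by
  rw [← strictRank_comp_equiv, strictRank, ← not_lt]
  exact fun h => lt_irrefl _
    ((Tuple.lt_card_lt_iff_apply_lt_of_monotone (Tuple.monotone_sort v)).1 h)

theorem le_card_strictRank_lt (v : ι → α) {k : ℕ} (hk : k ≤ Fintype.card ι) :
    k ≤ #{j | strictRank v j < k} := by
  set e := (Fintype.equivFin ι).symm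
  set σ := Tuple.sort (v ∘ e)
  calc k = #{j : Fin (Fintype.card ι) | (j : ℕ) < k} := by
        rw [Fin.card_filter_val_lt]; omega
    _ ≤ #{j | strictRank v (e (σ j)) < k} := by
      refine card_le_card (monotone_filter_right _ fun j _ hj => ?_)
      rw [← strictRank_comp_equiv]
      exact (strictRank_sort_le _ j).trans_lt hj
    _ = #{j | strictRank v j < k} := card_equiv (σ.trans e) (by simp)

theorem measurable_strictRank [TopologicalSpace α] [OrderClosedTopology α]
    [SecondCountableTopology α] [MeasurableSpace α] [OpensMeasurableSpace α] (j : ι) :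
    Measurable fun v : ι → α => strictRank v j := by
  classical
  simp_rw [strictRank, card_filter]
  exact measurable_sum _ fun i _ => Measurable.ite
    (measurableSet_lt (measurable_pi_apply i) (measurable_pi_apply j))
    measurable_const measurable_const

end StrictRank

theorem Multiset.sort_ofFn_eq_ofFn_comp_sort {α : Type*} [LinearOrder α] {n : ℕ}
    (v : Fin n → α) :
    (List.ofFn v : Multiset α).sort (· ≤ ·) = List.ofFn (v ∘ Tuple.sort v) :=
  ((Multiset.coe_eq_coe.1 (Multiset.sort_eq _ _)).trans ((Tuple.sort v).ofFn_comp_perm v).symm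
    ).eq_of_pairwise' (Multiset.pairwise_sort _ _) (Tuple.monotone_sort v).sortedLE_ofFn.pairwise

theorem kthSmallest_eq_apply_sort {n k : ℕ} (v : Fin n → ℝ) (hk : 1 ≤ k) (hkn : k ≤ n) :
    kthSmallest v k = v (Tuple.sort v ⟨k - 1, by omega⟩) := by
  rw [kthSmallest, Multiset.sort_ofFn_eq_ofFn_comp_sort,
    List.getD_eq_getElem _ _ (by simp; omega), List.getElem_ofFn, Function.comp_apply]

theorem le_kthSmallest_iff {n k : ℕ} (v : Fin n → ℝ) (hk : 1 ≤ k) (hkn : k ≤ n) (x : ℝ) :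
    x ≤ kthSmallest v k ↔ #{i | v i < x} < k := by
  have hsorted := Tuple.lt_card_lt_iff_apply_lt_of_monotone (j := ⟨k - 1, by omega⟩) (a := x)
    (Tuple.monotone_sort v)
  have hcard : #{i | (v ∘ Tuple.sort v) i < x} = #{i | v i < x} :=
    card_equiv (Tuple.sort v) (by simp)
  rw [kthSmallest_eq_apply_sort v hk hkn, ← not_lt, ← Function.comp_apply (f := v), ← hsorted,
    hcard, not_lt, Fin.val_mk]
  omega

theorem ProbabilityTheory.iIndepFun.map_comp_perm_eq {Ω ι β : Type*} [MeasurableSpace Ω]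
    [MeasurableSpace β] [Fintype ι] {μ : Measure Ω} {X : ι → Ω → β}
    (hX : ∀ i, Measurable (X i)) (hindep : iIndepFun X μ)
    (hident : ∀ i j, μ.map (X i) = μ.map (X j)) (e : Equiv.Perm ι) :
    μ.map (fun ω i => X (e i) ω) = μ.map (fun ω i => X i ω) := by
  rw [(hindep.precomp e.injective).map_fun_eq_pi_map fun i => (hX (e i)).aemeasurable,
    hindep.map_fun_eq_pi_map fun i => (hX i).aemeasurable]
  congr 1
  funext i
  exact hident (e i) i

open Classical in
theorem MeasureTheory.natCast_mul_le_sum_measure {Ω ι : Type*} [MeasurableSpace Ω]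
    [Fintype ι] (μ : Measure Ω) {A : ι → Set Ω} (hA : ∀ j, MeasurableSet (A j)) {k : ℕ}
    (hcover : ∀ ω, k ≤ #{j | ω ∈ A j}) :
    k * μ univ ≤ ∑ j, μ (A j) := by
  calc k * μ univ = ∫⁻ _, (k : ℝ≥0∞) ∂μ := (lintegral_const _).symm
    _ ≤ ∫⁻ ω, ∑ j, (A j).indicator 1 ω ∂μ := lintegral_mono fun ω => by
      simp only [Set.indicator_apply, Pi.one_apply, Finset.sum_boole]
      exact_mod_cast hcover ω
    _ = ∑ j, μ (A j) := by
      rw [lintegral_finsetSum _ fun j _ => measurable_one.indicator (hA j)]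
      simp_rw [lintegral_indicator_one (hA _)]

theorem le_card_mul_measure_strictRank_lt {Ω ι α : Type*} [MeasurableSpace Ω] [Fintype ι]
    [LinearOrder α] [TopologicalSpace α] [OrderClosedTopology α] [SecondCountableTopology α]
    [MeasurableSpace α] [OpensMeasurableSpace α] {μ : Measure Ω} [IsProbabilityMeasure μ]
    {X : ι → Ω → α} (hX : ∀ i, Measurable (X i)) (hindep : iIndepFun X μ)
    (hident : ∀ i j, μ.map (X i) = μ.map (X j)) {k : ℕ} (hk : k ≤ Fintype.card ι) (j : ι) :
    (k : ℝ≥0∞) ≤ Fintype.card ι * μ {ω | strictRank (fun i => X i ω) j < k} := by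
  classical
  have hmeas : Measurable fun ω i => X i ω := measurable_pi_lambda _ hX
  have hevent (i : ι) : MeasurableSet {v : ι → α | strictRank v i < k} :=
    measurable_strictRank i measurableSet_Iio
  have hsame (i : ι) : μ {ω | strictRank (fun l => X l ω) i < k} =
      μ {ω | strictRank (fun l => X l ω) j < k} := by
    have hswap : (fun ω l => X (Equiv.swap j i l) ω) ⁻¹' {v | strictRank v j < k} =
        {ω | strictRank (fun l => X l ω) i < k} := by
      ext ω
      change strictRank ((fun l => X l ω) ∘ Equiv.swap j i) j < k ↔ _
      rw [strictRank_comp_equiv, Equiv.swap_apply_left]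
      rfl
    rw [← hswap, ← Measure.map_apply (measurable_pi_lambda _ fun l => hX _) (hevent j),
      hindep.map_comp_perm_eq hX hident, Measure.map_apply hmeas (hevent j)]
    rfl
  calc (k : ℝ≥0∞) = k * μ univ := by simp
    _ ≤ ∑ i, μ {ω | strictRank (fun l => X l ω) i < k} :=
      natCast_mul_le_sum_measure μ (fun i => hmeas (hevent i))
        fun ω => by convert le_card_strictRank_lt (fun l => X l ω) hk; rfl
    _ = Fintype.card ι * μ {ω | strictRank (fun i => X i ω) j < k} := by
      simp [hsame]

/-- Split conformal coverage guarantee for i.i.d. data. -/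
theorem stmt_0 {Ω 𝒳 𝒴 : Type*} [MeasurableSpace Ω] [MeasurableSpace 𝒳] [MeasurableSpace 𝒴]
    (P : Measure Ω) [IsProbabilityMeasure P] (n : ℕ) (Z : Fin (n+1) → Ω → 𝒳 × 𝒴)
    (hmeas : ∀ i, Measurable (Z i))
    (hindep : iIndepFun Z P)
    (hident : ∀ i, Measure.map (Z i) P = Measure.map (Z 0) P)
    (s : 𝒳 × 𝒴 → ℝ) (hs : Measurable s)
    (α : ℝ) (hα : α ∈ Set.Ioo (0:ℝ) 1)
    (k : ℕ) (hk : (k : ℤ) = ⌈((n:ℝ)+1)*(1-α)⌉) (hkn : k ≤ n)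
    (qhat : Ω → ℝ)
    (hq : ∀ ω, qhat ω = kthSmallest (fun i : Fin n => s (Z i.castSucc ω)) k) :
    P {ω | s (Z (Fin.last n) ω) ≤ qhat ω} ≥ ENNReal.ofReal (1 - α) := by
  have hk_ge : ((n : ℝ) + 1) * (1 - α) ≤ k := by
    exact_mod_cast hk ▸ Int.le_ceil (((n : ℝ) + 1) * (1 - α))
  have hk_pos : 1 ≤ k := by
    have : (0 : ℝ) < ((n : ℝ) + 1) * (1 - α) := mul_pos (by positivity) (by linarith [hα.2])
    exact_mod_cast this.trans_le hk_ge
  have hevent : {ω | s (Z (Fin.last n) ω) ≤ qhat ω} =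
      {ω | strictRank (fun i => s (Z i ω)) (Fin.last n) < k} := by
    ext ω
    change s (Z _ ω) ≤ qhat ω ↔ strictRank (fun i => s (Z i ω)) (Fin.last n) < k
    rw [hq, le_kthSmallest_iff _ hk_pos hkn, strictRank_last]
  have hcover := le_card_mul_measure_strictRank_lt (fun i => hs.comp (hmeas i))
    (hindep.comp (fun _ => s) fun _ => hs)
    (fun i j => by
      rw [← Measure.map_map hs (hmeas i), ← Measure.map_map hs (hmeas j), hident i, hident j])
    (hkn.trans n.le_succ |>.trans_eq (Fintype.card_fin _).symm) (Fin.last n)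
  rw [Fintype.card_fin, Nat.cast_succ] at hcover
  rw [hevent, ge_iff_le,
    ← ENNReal.mul_le_mul_iff_right (a := (n : ℝ≥0∞) + 1) (by simp) (by simp)]
  calc ((n : ℝ≥0∞) + 1) * ENNReal.ofReal (1 - α)
      = ENNReal.ofReal (((n : ℝ) + 1) * (1 - α)) := by
        rw [ENNReal.ofReal_mul (by positivity)]
        norm_cast
    _ ≤ ENNReal.ofReal k := ENNReal.ofReal_le_ofReal hk_ge
    _ = k := ENNReal.ofReal_natCast k
    _ ≤ _ := hcover
end

section
/- Let Z_1,...,Z_{n+1} be exchangeable and almost surely distinct real random variables, and let Z_{(k)} be the k-th order statistic of Z_1,...,Z_n with k = ⌈(n+1)(1-α)⌉ ≤ n. Then P(Z_{n+1} ≤ Z_{(k)}) ≤ 1-α + 1/(n+1) (upper coverage bound for split conformal prediction). -/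
/-!
On the event that Z₁, …, Zₙ₊₁ are pairwise distinct, Zₙ₊₁ ≤ Z₍ₖ₎ forces the rank of Zₙ₊₁ among
all n + 1 values to be at most k. By exchangeability every coordinate has rank at most k with the
same probability, and exactly k of them do, so this probability is k / (n + 1); the choice
k = ⌈(n + 1)(1 - α)⌉ makes it at most 1 - α + 1 / (n + 1).
-/

open MeasureTheory ProbabilityTheory Real Set

open Finset
open scoped ENNReal

theorem List.countP_lt_le_of_le_getElem {α : Type*} [Preorder α] [DecidableLT α] {s : List α}
    (hs : s.Pairwise (· ≤ ·)) {i : ℕ} (hi : i < s.length) {t : α} (ht : t ≤ s[i]) :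
    s.countP (· < t) ≤ i := by
  have hdrop : (s.drop i).countP (· < t) = 0 := by
    rw [List.countP_eq_zero, List.drop_eq_getElem_cons hi]
    rintro a ha
    have : s[i] ≤ a := by
      rcases List.mem_cons.1 ha with rfl | ha
      · exact le_rfl
      · exact List.rel_of_pairwise_cons (List.drop_eq_getElem_cons hi ▸ hs.drop) ha
    simpa using not_lt_of_ge (ht.trans this)
  calc s.countP (· < t) = (s.take i).countP (· < t) + (s.drop i).countP (· < t) := by
        rw [← List.countP_append, List.take_append_drop]
    _ ≤ i := by
        rw [hdrop, add_zero]
        exact List.countP_le_length.trans (List.length_take_le _ _)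

theorem card_lt_lt_of_le_kthSmallest {n k : ℕ} (v : Fin n → ℝ) (hk1 : 1 ≤ k) (hkn : k ≤ n)
    {t : ℝ} (ht : t ≤ kthSmallest v k) : #{i | v i < t} < k := by
  have hlen : ((List.ofFn v : Multiset ℝ).sort (· ≤ ·)).length = n := by simp
  have hcount : ((List.ofFn v : Multiset ℝ).sort (· ≤ ·)).countP (· < t) = #{i | v i < t} := by
    rw [← Multiset.coe_countP, Multiset.sort_eq, ← Fin.univ_val_map, Multiset.countP_map]
    rfl
  rw [kthSmallest, List.getD_eq_getElem _ _ (by omega)] at ht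
  have := List.countP_lt_le_of_le_getElem (Multiset.pairwise_sort _ _) (by omega) ht
  omega

theorem ae_injective_of_measure_eq_zero {ι α β : Type*} [Countable ι] [MeasurableSpace α]
    {μ : Measure α} {g : ι → α → β} (h : ∀ i j, i ≠ j → μ {a | g i a = g j a} = 0) :
    ∀ᵐ a ∂μ, Function.Injective fun i => g i a := by
  have : ∀ᵐ a ∂μ, ∀ i j, i ≠ j → g i a ≠ g j a :=
    ae_all_iff.2 fun i => ae_all_iff.2 fun j => by
      by_cases hij : i = j
      · exact Filter.Eventually.of_forall fun _ h => (h hij).elim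
      · filter_upwards [measure_eq_zero_iff_ae_notMem.1 (h i j hij)] with a ha _ using ha
  filter_upwards [this] with a ha i j hga
  by_contra hij
  exact ha i j hij hga

theorem div_le_of_eq_ceil_mul {k : ℕ} {N β : ℝ} (hN : 0 < N) (hk : (k : ℤ) = ⌈N * β⌉) :
    (k : ℝ) / N ≤ β + 1 / N := by
  have := Int.ceil_lt_add_one (N * β)
  rw [← hk] at this
  push_cast at this
  rw [div_le_iff₀ hN, add_mul, one_div_mul_cancel hN.ne']
  linarith

namespace SplitConformal

noncomputable def rank {m : ℕ} (x : Fin m → ℝ) (i : Fin m) : ℕ := #{j | x j ≤ x i}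

section Rank

variable {m : ℕ} {x : Fin m → ℝ}

theorem rank_lt_rank {i j : Fin m} (h : x i < x j) : rank x i < rank x j :=
  card_lt_card <| (Finset.ssubset_iff_of_subset fun _ hl => by
    simp only [mem_filter] at hl ⊢; exact ⟨hl.1, hl.2.trans h.le⟩).2
    ⟨j, by simp, by simpa using h⟩

theorem one_le_rank (x : Fin m → ℝ) (i : Fin m) : 1 ≤ rank x i :=
  card_pos.2 ⟨i, by simp⟩

theorem rank_le (x : Fin m → ℝ) (i : Fin m) : rank x i ≤ m :=
  (card_filter_le _ _).trans_eq (card_fin m)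

theorem rank_injective (hx : Function.Injective x) : Function.Injective (rank x) := fun _ _ h =>
  hx <| le_antisymm (not_lt.1 fun hlt => (rank_lt_rank hlt).ne' h)
    (not_lt.1 fun hlt => (rank_lt_rank hlt).ne h)

theorem image_rank (hx : Function.Injective x) : Finset.univ.image (rank x) = Finset.Icc 1 m :=
  eq_of_subset_of_card_le (fun _ ha => by
      obtain ⟨i, -, rfl⟩ := mem_image.1 ha
      exact mem_Icc.2 ⟨one_le_rank x i, rank_le x i⟩)
    (by simp [card_image_of_injective _ (rank_injective hx)])

theorem card_rank_le (hx : Function.Injective x) {k : ℕ} (hk : k ≤ m) :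
    #{i | rank x i ≤ k} = k := by
  rw [← card_image_of_injective _ (rank_injective hx), ← filter_image (p := (· ≤ k)),
    image_rank hx]
  convert Nat.card_Icc 1 k using 2
  · ext a; simp only [mem_filter, Finset.mem_Icc]; omega
  · omega

theorem rank_comp_perm (x : Fin m → ℝ) (σ : Equiv.Perm (Fin m)) (i : Fin m) :
    rank (x ∘ σ) i = rank x (σ i) :=
  card_equiv σ (by simp)

theorem rank_eq_card_lt_add_one (hx : Function.Injective x) (i : Fin m) :
    rank x i = #{j | x j < x i} + 1 := by
  rw [rank, ← card_insert_of_notMem (s := {j | x j < x i}) (a := i) (by simp)]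
  congr 1
  ext j
  simp [le_iff_lt_or_eq, hx.eq_iff, or_comm]

theorem rank_last {n : ℕ} {x : Fin (n + 1) → ℝ} (hx : Function.Injective x) :
    rank x (Fin.last n) = #{i : Fin n | x i.castSucc < x (Fin.last n)} + 1 := by
  rw [rank_eq_card_lt_add_one hx, card_filter, card_filter, Fin.sum_univ_castSucc]
  simp

theorem measurable_rank (i : Fin m) : Measurable fun x : Fin m → ℝ => rank x i := by
  simp_rw [rank, card_filter]
  exact Finset.measurable_sum _ fun j _ =>
    Measurable.ite (measurableSet_le (measurable_pi_apply j) (measurable_pi_apply i))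
      measurable_const measurable_const

theorem rank_last_le_of_le_kthSmallest {n k : ℕ} {x : Fin (n + 1) → ℝ}
    (hx : Function.Injective x) (hk1 : 1 ≤ k) (hkn : k ≤ n)
    (h : x (Fin.last n) ≤ kthSmallest (fun i : Fin n => x i.castSucc) k) :
    rank x (Fin.last n) ≤ k := by
  rw [rank_last hx]
  exact card_lt_lt_of_le_kthSmallest _ hk1 hkn h

end Rank

section Exchangeable

variable {m : ℕ} {μ : Measure (Fin m → ℝ)}

theorem measurableSet_rank_le (i : Fin m) (k : ℕ) :
    MeasurableSet {x : Fin m → ℝ | rank x i ≤ k} :=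
  measurable_rank i measurableSet_Iic

theorem measure_rank_le_eq (hexch : ∀ σ : Equiv.Perm (Fin m), μ.map (· ∘ σ) = μ) (k : ℕ)
    (i j : Fin m) : μ {x | rank x i ≤ k} = μ {x | rank x j ≤ k} := by
  have hσ : Measurable fun x : Fin m → ℝ => x ∘ Equiv.swap i j := by fun_prop
  calc μ {x | rank x i ≤ k} = μ ((· ∘ Equiv.swap i j) ⁻¹' {x | rank x j ≤ k}) := by
        simp [Set.preimage, rank_comp_perm]
    _ = μ {x | rank x j ≤ k} := by
        rw [← Measure.map_apply hσ (measurableSet_rank_le j k), hexch]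

theorem sum_measure_rank_le [IsProbabilityMeasure μ] (hinj : ∀ᵐ x ∂μ, Function.Injective x)
    {k : ℕ} (hk : k ≤ m) : ∑ i, μ {x | rank x i ≤ k} = k := by
  calc ∑ i, μ {x | rank x i ≤ k}
      = ∫⁻ x, ∑ i, {x | rank x i ≤ k}.indicator 1 x ∂μ := by
        rw [lintegral_finsetSum _ fun i _ => measurable_one.indicator (measurableSet_rank_le i k)]
        simp [lintegral_indicator_one (measurableSet_rank_le _ k)]
    _ = ∫⁻ _, (k : ℝ≥0∞) ∂μ := by
        refine lintegral_congr_ae (hinj.mono fun x hx => ?_)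
        simp [Set.indicator_apply, Finset.sum_boole, card_rank_le hx hk]
    _ = k := by simp

theorem measure_rank_le [IsProbabilityMeasure μ]
    (hexch : ∀ σ : Equiv.Perm (Fin m), μ.map (· ∘ σ) = μ) (hinj : ∀ᵐ x ∂μ, Function.Injective x)
    {k : ℕ} (hk : k ≤ m) (i : Fin m) : μ {x | rank x i ≤ k} = k / m := by
  rw [ENNReal.eq_div_iff (by simpa using i.pos.ne') (by simp), ← sum_measure_rank_le hinj hk]
  simp [measure_rank_le_eq hexch k _ i]

end Exchangeable

end SplitConformal

open SplitConformal

/-- Upper coverage bound for split conformal prediction under a.s. distinct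
exchangeable variables. -/
theorem stmt_3 {Ω : Type*} [MeasurableSpace Ω] (P : Measure Ω) [IsProbabilityMeasure P]
    (n : ℕ) (Z : Fin (n+1) → Ω → ℝ) (hmeas : ∀ i, Measurable (Z i))
    (hexch : ∀ σ : Equiv.Perm (Fin (n+1)),
      Measure.map (fun ω i => Z (σ i) ω) P = Measure.map (fun ω i => Z i ω) P)
    (hdist : ∀ i j : Fin (n+1), i ≠ j → P {ω | Z i ω = Z j ω} = 0)
    (α : ℝ) (hα : α ∈ Set.Ioo (0:ℝ) 1)
    (k : ℕ) (hk : (k : ℤ) = ⌈((n:ℝ)+1)*(1-α)⌉) (hkn : k ≤ n) :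
    P {ω | Z (Fin.last n) ω ≤ kthSmallest (fun i : Fin n => Z i.castSucc ω) k} ≤
      ENNReal.ofReal (1 - α + 1/((n:ℝ)+1)) := by
  have hk1 : 1 ≤ k := by
    have : (0 : ℤ) < ⌈((n:ℝ)+1)*(1-α)⌉ :=
      Int.ceil_pos.2 (mul_pos (by positivity) (by linarith [hα.2]))
    omega
  set f : Ω → Fin (n + 1) → ℝ := fun ω i => Z i ω
  have hf : Measurable f := measurable_pi_lambda _ hmeas
  have : IsProbabilityMeasure (P.map f) := Measure.isProbabilityMeasure_map hf.aemeasurable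
  have hexch_map : ∀ σ : Equiv.Perm (Fin (n + 1)), (P.map f).map (· ∘ σ) = P.map f := fun σ => by
    rw [Measure.map_map (by fun_prop) hf]
    exact hexch σ
  have hinj_map : ∀ᵐ x ∂P.map f, Function.Injective x :=
    ae_injective_of_measure_eq_zero fun i j hij => by
      rw [Measure.map_apply hf (measurableSet_eq_fun (by fun_prop) (by fun_prop))]
      exact hdist i j hij
  calc P {ω | Z (Fin.last n) ω ≤ kthSmallest (fun i : Fin n => Z i.castSucc ω) k}
      ≤ P (f ⁻¹' {x | rank x (Fin.last n) ≤ k}) :=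
        measure_mono_ae <| (ae_injective_of_measure_eq_zero hdist).mono fun ω hω hle =>
          rank_last_le_of_le_kthSmallest hω hk1 hkn hle
    _ = k / (n + 1) := by
        rw [← Measure.map_apply hf (measurableSet_rank_le _ _),
          measure_rank_le hexch_map hinj_map (by omega)]
        norm_cast
    _ = ENNReal.ofReal (k / ((n : ℝ) + 1)) := by
        rw [ENNReal.ofReal_div_of_pos (by positivity)]
        norm_cast
    _ ≤ ENNReal.ofReal (1 - α + 1/((n:ℝ)+1)) :=
        ENNReal.ofReal_le_ofReal (div_le_of_eq_ceil_mul (by positivity) hk)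
end

section
/- Adaptive conformal inference (ACI) step-size guarantee: let α ∈ (0,1), γ > 0, and define α_{t+1} = α_t + γ(α - err_t) where err_t ∈ {0,1} indicates miscoverage at time t, starting from α_1 ∈ [0,1]. Then for all t, α_t ∈ [-γ, 1+γ], and consequently |(1/T)∑_{t=1}^T err_t - α| ≤ (max(α_1, 1-α_1) + γ)/(γT); in particular the empirical miscoverage frequency converges to α as T → ∞ at rate O(1/(γT)). -/
open MeasureTheory ProbabilityTheory Real Set

/-- Adaptive conformal inference: boundedness of the adaptive level and the
O(1/(γT)) bound on the deviation of empirical miscoverage from α. -/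
theorem stmt_14 (α γ : ℝ) (hα : α ∈ Set.Ioo (0:ℝ) 1) (hγ : 0 < γ)
    (a : ℕ → ℝ) (err : ℕ → ℝ)
    (ha0 : a 0 ∈ Set.Icc (0:ℝ) 1)
    (herr : ∀ t, err t = 0 ∨ err t = 1)
    (hrec : ∀ t, a (t+1) = a t + γ * (α - err t))
    (hlow : ∀ t, a t ≤ 0 → err t = 0)
    (hhigh : ∀ t, 1 ≤ a t → err t = 1) :
    (∀ t, a t ∈ Set.Icc (-γ) (1+γ)) ∧
    (∀ T : ℕ, 0 < T →
      |(∑ t ∈ Finset.range T, err t) / T - α| ≤ (max (a 0) (1 - a 0) + γ) / (γ * T)) := by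
  obtain ⟨hα0, hα1⟩ := hα
  have hbd : ∀ t, a t ∈ Set.Icc (-γ) (1+γ) := by
    intro t
    induction t with
    | zero =>
      constructor
      · linarith [ha0.1]
      · linarith [ha0.2]
    | succ n ih =>
      rcases herr n with h0 | h1
      · have hn1 : a n < 1 := by
          by_contra h
          have := hhigh n (by linarith)
          rw [h0] at this; linarith
        rw [hrec n, h0]
        constructor
        · nlinarith [ih.1]
        · nlinarith
      · have hn0 : 0 < a n := by
          by_contra h
          have := hlow n (by linarith)
          rw [h1] at this; linarith
        rw [hrec n, h1]
        constructor
        · nlinarith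
        · nlinarith [ih.2]
  refine ⟨hbd, ?_⟩
  intro T hT
  have htel : ∀ T : ℕ, a T = a 0 + γ * (T * α - ∑ t ∈ Finset.range T, err t) := by
    intro T
    induction T with
    | zero => simp
    | succ n ih =>
      rw [hrec n, ih, Finset.sum_range_succ]
      push_cast
      ring
  have hTpos : (0:ℝ) < T := by exact_mod_cast hT
  have key : (∑ t ∈ Finset.range T, err t) / T - α = (a 0 - a T) / (γ * T) := by
    have := htel T
    field_simp
    nlinarith [htel T]
  rw [key, abs_div, abs_of_pos (by positivity : (0:ℝ) < γ * T)]
  apply div_le_div_of_nonneg_right _ (by positivity)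
  · rw [abs_le]
    constructor
    · have := (hbd T).2
      have h2 := le_max_right (a 0) (1 - a 0)
      linarith [ha0.1]
    · have := (hbd T).1
      have h2 := le_max_left (a 0) (1 - a 0)
      linarith
end
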